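/- arXiv:2602.09952 — 5 statements merged into one kernel-verified Lean document; each statement's English description precedes it below -/
import Mathlib

section
/- Let U, V ⊆ ℂ be open sets and let φ : U → V be a conformal isomorphism (holomorphic bijection). Let A ⊆ U be a compact set. Then there exists ε > 0 such that for every holomorphic function f : U → ℂ with |f(z) − φ(z)| ≤ ε for all z ∈ U, the restriction of f to A is injective and f(A) ⊆ V. -/
open Set Metric

set_option maxHeartbeats 1000000

/-- Cauchy estimate: if `g` is holomorphic on `U`, bounded by `ε` on `U`, and the closed ball
of radius `R` about `z` is contained in `U`, then `‖deriv g z‖ ≤ ε / R`. -/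
lemma cauchy_deriv_bound {U : Set ℂ} (hU : IsOpen U) {g : ℂ → ℂ}
    (hg : DifferentiableOn ℂ g U) {ε R : ℝ} (hR : 0 < R) {z : ℂ}
    (hball : closedBall z R ⊆ U) (hbd : ∀ w ∈ U, ‖g w‖ ≤ ε) :
    ‖deriv g z‖ ≤ ε / R := by
  have hd : DiffContOnCl ℂ g (ball z R) := by
    refine DifferentiableOn.diffContOnCl ?_
    refine hg.mono ?_
    exact (closure_ball_subset_closedBall).trans hball
  exact Complex.norm_deriv_le_of_forall_mem_sphere_norm_le hR hd fun w hw =>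
    hbd w (hball (sphere_subset_closedBall hw))

theorem stmt0 (U V : Set ℂ) (hU : IsOpen U) (hV : IsOpen V)
    (φ : ℂ → ℂ) (hφ : DifferentiableOn ℂ φ U)
    (hbij : Set.BijOn φ U V)
    (hφ' : ∀ z ∈ U, deriv φ z ≠ 0)
    (A : Set ℂ) (hA : IsCompact A) (hAU : A ⊆ U) :
    ∃ ε > 0, ∀ f : ℂ → ℂ, DifferentiableOn ℂ f U →
      (∀ z ∈ U, ‖f z - φ z‖ ≤ ε) →
      Set.InjOn f A ∧ f '' A ⊆ V := by
  rcases A.eq_empty_or_nonempty with rfl | hAne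
  · exact ⟨1, one_pos, fun f _ _ => ⟨injOn_empty f, by simp⟩⟩
  -- a compact collar around A inside U
  obtain ⟨r, hr, hKU⟩ := hA.exists_cthickening_subset_open hU hAU
  set K : Set ℂ := cthickening r A with hKdef
  have hKcomp : IsCompact K := hA.cthickening
  set K0 : Set ℂ := cthickening (r / 2) A with hK0def
  have hK0K : K0 ⊆ K := cthickening_mono (by linarith) A
  have hAK0 : A ⊆ K0 := self_subset_cthickening A
  have hAK : A ⊆ K := self_subset_cthickening A
  have hK0U : K0 ⊆ U := hK0K.trans hKU
  -- closed balls of radius r/2 around points of K0 stay in K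
  have hballK : ∀ z ∈ K0, closedBall z (r / 2) ⊆ K := by
    intro z hz
    refine (closedBall_subset_cthickening hz (r / 2)).trans ?_
    rw [hK0def, hKdef]
    have := cthickening_cthickening_subset (by linarith : (0:ℝ) ≤ r / 2)
      (by linarith : (0:ℝ) ≤ r / 2) A
    simpa [add_halves] using this
  -- deriv φ is continuous on U
  have hφan : AnalyticOnNhd ℂ φ U := hφ.analyticOnNhd hU
  have hderivcont : ContinuousOn (deriv φ) U := hφan.deriv.continuousOn
  -- minimum of ‖deriv φ‖ on K
  have hKne : K.Nonempty := hAne.mono hAK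
  obtain ⟨z₀, hz₀K, hz₀min'⟩ := hKcomp.exists_isMinOn hKne
    ((hderivcont.mono hKU).norm)
  have hz₀min := isMinOn_iff.1 hz₀min'
  set m : ℝ := ‖deriv φ z₀‖ with hm
  have hmpos : 0 < m := norm_pos_iff.mpr (hφ' z₀ (hKU hz₀K))
  have hmK : ∀ z ∈ K, m ≤ ‖deriv φ z‖ := fun z hz => hz₀min z hz
  -- uniform continuity of deriv φ on K
  have huc : UniformContinuousOn (deriv φ) K :=
    hKcomp.uniformContinuousOn_of_continuous (hderivcont.mono hKU)
  obtain ⟨δ₁, hδ₁, hδ₁uc⟩ := Metric.uniformContinuousOn_iff.1 huc (m / 4) (by positivity)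
  set δ : ℝ := min (δ₁ / 2) (r / 2) with hδdef
  have hδpos : 0 < δ := lt_min (by positivity) (by positivity)
  -- separation constant for pairs at distance ≥ δ
  have hsep : ∃ c > 0, ∀ a ∈ A, ∀ b ∈ A, δ ≤ dist a b → c ≤ ‖φ a - φ b‖ := by
    set S : Set (ℂ × ℂ) := (A ×ˢ A) ∩ {p : ℂ × ℂ | δ ≤ dist p.1 p.2} with hSdef
    have hScomp : IsCompact S :=
      (hA.prod hA).inter_right (isClosed_le continuous_const (continuous_dist))
    rcases S.eq_empty_or_nonempty with hSe | hSne
    · refine ⟨1, one_pos, fun a ha b hb hd => absurd ?_ (hSe ▸ Set.notMem_empty (a, b))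
      ⟩
      exact ⟨⟨ha, hb⟩, hd⟩
    · have hcont : ContinuousOn (fun p : ℂ × ℂ => ‖φ p.1 - φ p.2‖) S := by
        have h1 : ContinuousOn φ A := (hφ.continuousOn).mono hAU
        have : ContinuousOn (fun p : ℂ × ℂ => φ p.1 - φ p.2) S := by
          refine ContinuousOn.sub ?_ ?_
          · exact (h1.comp continuous_fst.continuousOn fun p hp => hp.1.1)
          · exact (h1.comp continuous_snd.continuousOn fun p hp => hp.1.2)
        exact this.norm
      obtain ⟨p, hpS, hpmin'⟩ := hScomp.exists_isMinOn hSne hcont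
      have hpmin := isMinOn_iff.1 hpmin'
      refine ⟨‖φ p.1 - φ p.2‖, ?_, fun a ha b hb hd => hpmin (a, b) ⟨⟨ha, hb⟩, hd⟩⟩
      have hne : p.1 ≠ p.2 := by
        intro h'
        have h2 := hpS.2
        rw [Set.mem_setOf_eq, h', dist_self] at h2
        linarith
      have hφne : φ p.1 ≠ φ p.2 := fun h => hne (hbij.injOn (hAU hpS.1.1) (hAU hpS.1.2) h)
      exact norm_pos_iff.mpr (sub_ne_zero.mpr hφne)
  obtain ⟨c, hc, hcsep⟩ := hsep
  -- φ '' A is compact inside open V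
  have hφA : IsCompact (φ '' A) := hA.image_of_continuousOn (hφ.continuousOn.mono hAU)
  obtain ⟨η, hη, hηV⟩ := hφA.exists_thickening_subset_open hV
    (fun y ⟨a, ha, hay⟩ => hay ▸ hbij.mapsTo (hAU ha))
  -- the final ε
  refine ⟨min (min (c / 3) (η / 2)) (m * r / 16), lt_min (lt_min (by positivity) (by positivity))
    (by positivity), fun f hf hfφ => ?_⟩
  set ε : ℝ := min (min (c / 3) (η / 2)) (m * r / 16) with hε
  have hεc : ε ≤ c / 3 := le_trans (min_le_left _ _) (min_le_left _ _)
  have hεη : ε ≤ η / 2 := le_trans (min_le_left _ _) (min_le_right _ _)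
  have hεm : ε ≤ m * r / 16 := min_le_right _ _
  -- the derivative estimate on K0
  have hderiv_close : ∀ z ∈ K0, ‖deriv f z - deriv φ z‖ ≤ m / 8 := by
    intro z hz
    have hzU : z ∈ U := hK0U hz
    have hgdiff : DifferentiableOn ℂ (fun w => f w - φ w) U := hf.sub hφ
    have hgball : closedBall z (r / 2) ⊆ U := (hballK z hz).trans hKU
    have := cauchy_deriv_bound hU hgdiff (by positivity : (0:ℝ) < r / 2) hgball hfφ
    have hderiv_eq : deriv (fun w => f w - φ w) z = deriv f z - deriv φ z := by
      apply deriv_sub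
      · exact hf.differentiableAt (hU.mem_nhds hzU)
      · exact hφ.differentiableAt (hU.mem_nhds hzU)
    rw [hderiv_eq] at this
    calc ‖deriv f z - deriv φ z‖ ≤ ε / (r / 2) := this
      _ ≤ (m * r / 16) / (r / 2) := by
          apply div_le_div_of_nonneg_right hεm (by positivity) |>.trans_eq rfl
      _ = m / 8 := by field_simp; ring
  constructor
  · -- injectivity
    intro a ha b hb hfab
    by_contra hne
    rcases le_or_gt (dist a b) δ with hnear | hfar
    · -- near case: mean value estimate
      have hsegK0 : closedBall a δ ⊆ K0 :=
        (closedBall_subset_closedBall (min_le_right (δ₁ / 2) (r / 2))).trans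
          (closedBall_subset_cthickening ha (r / 2))
      have hC : ∀ z ∈ closedBall a δ, ‖deriv f z - deriv φ a‖ ≤ m / 8 + m / 4 := by
        intro z hz
        have hzK0 : z ∈ K0 := hsegK0 hz
        have h1 : ‖deriv f z - deriv φ z‖ ≤ m / 8 := hderiv_close z hzK0
        have h2 : ‖deriv φ z - deriv φ a‖ < m / 4 := by
          have hdza : dist z a < δ₁ := by
            calc dist z a ≤ δ := mem_closedBall.1 hz
              _ ≤ δ₁ / 2 := min_le_left _ _
              _ < δ₁ := by linarith
          have := hδ₁uc z (hK0K hzK0) a (hK0K (hAK0 ha)) hdza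
          simpa [dist_eq_norm] using this
        calc ‖deriv f z - deriv φ a‖
            = ‖(deriv f z - deriv φ z) + (deriv φ z - deriv φ a)‖ := by ring_nf
          _ ≤ ‖deriv f z - deriv φ z‖ + ‖deriv φ z - deriv φ a‖ := norm_add_le _ _
          _ ≤ m / 8 + m / 4 := add_le_add h1 h2.le
      have hmv : ∀ z ∈ closedBall a δ, HasDerivWithinAt (fun w => f w - deriv φ a * w)
          (deriv f z - deriv φ a) (closedBall a δ) z := by
        intro z hz
        have hzU : z ∈ U := hK0U (hsegK0 hz)
        have h1 : HasDerivAt f (deriv f z) z := (hf.differentiableAt (hU.mem_nhds hzU)).hasDerivAt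
        have h2 : HasDerivAt (fun w => deriv φ a * w) (deriv φ a) z := by
          simpa using (hasDerivAt_id z).const_mul (deriv φ a)
        exact (h1.sub h2).hasDerivWithinAt
      have hbmem : b ∈ closedBall a δ := by
        rw [mem_closedBall, dist_comm]; exact hnear
      have key := (convex_closedBall a δ).norm_image_sub_le_of_norm_hasDerivWithin_le
        hmv hC (mem_closedBall_self hδpos.le) hbmem
      have heq : (f b - deriv φ a * b) - (f a - deriv φ a * a) = -(deriv φ a * (b - a)) := by
        rw [← hfab]; ring
      have hub : ‖deriv φ a‖ * ‖b - a‖ ≤ (m / 8 + m / 4) * ‖b - a‖ := by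
        calc ‖deriv φ a‖ * ‖b - a‖ = ‖-(deriv φ a * (b - a))‖ := by rw [norm_neg, norm_mul]
          _ = ‖(f b - deriv φ a * b) - (f a - deriv φ a * a)‖ := by rw [heq]
          _ ≤ (m / 8 + m / 4) * ‖b - a‖ := key
      have hpos : 0 < ‖b - a‖ := norm_pos_iff.2 (sub_ne_zero.2 (Ne.symm hne))
      have hma : m ≤ ‖deriv φ a‖ := hmK a (hAK ha)
      nlinarith
    · -- far case: separation
      have h1 := hcsep a ha b hb hfar.le
      have e1 : φ a - φ b = (φ a - f a) + (f b - φ b) := by rw [hfab]; ring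
      have b1 : ‖φ a - f a‖ ≤ ε := by rw [norm_sub_rev]; exact hfφ a (hAU ha)
      have b2 : ‖f b - φ b‖ ≤ ε := hfφ b (hAU hb)
      have h2 : ‖φ a - φ b‖ ≤ 2 * ε := by
        rw [e1]
        calc ‖(φ a - f a) + (f b - φ b)‖ ≤ ‖φ a - f a‖ + ‖f b - φ b‖ := norm_add_le _ _
          _ ≤ 2 * ε := by linarith
      linarith
  · -- image inside V
    rintro y ⟨a, ha, rfl⟩
    apply hηV
    rw [Metric.mem_thickening_iff]
    exact ⟨φ a, ⟨a, ha, rfl⟩, lt_of_le_of_lt (by simpa [dist_eq_norm] using hfφ a (hAU ha))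
      (lt_of_le_of_lt hεη (by linarith))⟩
end

section
/- Let U, V ⊆ ℂ be open, and let f : U → V be holomorphic and nowhere locally constant. Let X ⊆ U be compact. Then for every ε > 0 there exists δ > 0 such that: for every set P ⊆ ℂ with dist(z, P) ≤ δ for all z ∈ f(X), and every point w ∈ X, we have dist(w, f⁻¹(P)) ≤ ε. -/
open Set Metric

/-- Local open mapping with a uniform radius near a point. -/
lemma stmt4_aux (U : Set ℂ) (hU : IsOpen U)
    (f : ℂ → ℂ) (hf : DifferentiableOn ℂ f U)
    (hnlc : ∀ W : Set ℂ, IsOpen W → W ⊆ U → W.Nonempty → ¬ ∃ c, ∀ z ∈ W, f z = c)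
    {ε : ℝ} (hε : 0 < ε) {w : ℂ} (hw : w ∈ U) :
    ∃ r > 0, ∃ s > 0, ∀ w' ∈ ball w s,
      ball (f w') r ⊆ f '' (ball w' ε ∩ U) := by
  have hA : AnalyticAt ℂ f w := hf.analyticAt (hU.mem_nhds hw)
  rcases hA.eventually_constant_or_nhds_le_map_nhds with hconst | hopen
  · exfalso
    -- f is eventually constant near w, contradicting hnlc
    obtain ⟨t, htw, hto, hwt⟩ := _root_.eventually_nhds_iff.mp hconst
    refine hnlc (t ∩ U) (hto.inter hU) inter_subset_right ⟨w, hwt, hw⟩ ⟨f w, ?_⟩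
    exact fun z hz => htw z hz.1
  · -- ball (w, ε/2) ∩ U is a nhds of w, so its image is a nhds of f w
    have h1 : ball w (ε / 2) ∩ U ∈ nhds w :=
      Filter.inter_mem (ball_mem_nhds w (by linarith)) (hU.mem_nhds hw)
    have h2 : f '' (ball w (ε / 2) ∩ U) ∈ nhds (f w) := hopen (Filter.image_mem_map h1)
    obtain ⟨r, hr, hball⟩ := Metric.mem_nhds_iff.mp h2
    -- choose s ≤ ε/2 with f continuous: dist (f w') (f w) < r/2 on ball w s
    have hc : ContinuousAt f w := hA.continuousAt
    obtain ⟨s, hs, hsf⟩ := Metric.continuousAt_iff.mp hc (r / 2) (by linarith)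
    refine ⟨r / 2, by linarith, min s (ε / 2), lt_min hs (by linarith), fun w' hw' y hy => ?_⟩
    have hd1 : dist w' w < s := lt_of_lt_of_le (mem_ball.mp hw') (min_le_left _ _)
    have hd2 : dist w' w < ε / 2 := lt_of_lt_of_le (mem_ball.mp hw') (min_le_right _ _)
    have hy2 : y ∈ ball (f w) r := by
      have := hsf hd1
      calc dist y (f w) ≤ dist y (f w') + dist (f w') (f w) := dist_triangle _ _ _
        _ < r / 2 + r / 2 := add_lt_add (mem_ball.mp hy) this
        _ = r := by ring
    obtain ⟨z, ⟨hz1, hz2⟩, hz3⟩ := hball hy2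
    refine ⟨z, ⟨?_, hz2⟩, hz3⟩
    have : dist z w < ε / 2 := mem_ball.mp hz1
    have : dist z w' ≤ dist z w + dist w w' := dist_triangle _ _ _
    rw [mem_ball]
    rw [dist_comm] at hd2
    linarith

theorem stmt4 (U V : Set ℂ) (hU : IsOpen U) (hV : IsOpen V)
    (f : ℂ → ℂ) (hf : DifferentiableOn ℂ f U) (hmaps : Set.MapsTo f U V)
    (hnlc : ∀ W : Set ℂ, IsOpen W → W ⊆ U → W.Nonempty → ¬ ∃ c, ∀ z ∈ W, f z = c)
    (X : Set ℂ) (hX : IsCompact X) (hXU : X ⊆ U) :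
    ∀ ε > 0, ∃ δ > 0, ∀ P : Set ℂ,
      (∀ z ∈ f '' X, Metric.infDist z P ≤ δ) →
      ∀ w ∈ X, Metric.infDist w (U ∩ f ⁻¹' P) ≤ ε := by
  intro ε hε
  -- for each w ∈ X, uniform open-mapping data
  choose! r hr s hs hrs using fun w (hw : w ∈ X) =>
    stmt4_aux U hU f hf hnlc hε (hXU hw)
  -- finite subcover
  obtain ⟨t, htX, hcov⟩ := hX.elim_nhds_subcover (fun w => ball w (s w))
    (fun w hw => ball_mem_nhds w (hs w hw))
  by_cases htne : t.Nonempty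
  · set δ := (t.inf' htne fun w => r w) / 2 with hδdef
    have hδpos : 0 < δ := by
      have : 0 < t.inf' htne fun w => r w := by
        rw [Finset.lt_inf'_iff]
        exact fun w hw => hr w (htX w hw)
      positivity
    refine ⟨δ, hδpos, fun P hP w hw => ?_⟩
    rcases P.eq_empty_or_nonempty with rfl | hPne
    · simp [Set.inter_empty, Metric.infDist_empty]; linarith
    obtain ⟨i, hi, hwi⟩ := Set.mem_iUnion₂.mp (hcov hw)
    have hri : δ < r i := by
      have : t.inf' htne (fun w => r w) ≤ r i := Finset.inf'_le _ hi
      have h0 : 0 < t.inf' htne fun w => r w := by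
        rw [Finset.lt_inf'_iff]; exact fun w hw => hr w (htX w hw)
      rw [hδdef]; linarith
    have hinf : infDist (f w) P ≤ δ := hP (f w) ⟨w, hw, rfl⟩
    obtain ⟨p, hpP, hpd⟩ := Metric.infDist_lt_iff hPne |>.mp (lt_of_le_of_lt hinf hri)
    have hpb : p ∈ ball (f w) (r i) := by rwa [mem_ball, dist_comm]
    obtain ⟨z, ⟨hz1, hz2⟩, hz3⟩ := hrs i (htX i hi) w hwi hpb
    have hzmem : z ∈ U ∩ f ⁻¹' P := ⟨hz2, by rw [Set.mem_preimage, hz3]; exact hpP⟩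
    calc infDist w (U ∩ f ⁻¹' P) ≤ dist w z := Metric.infDist_le_dist_of_mem hzmem
      _ ≤ ε := by rw [dist_comm]; exact le_of_lt (mem_ball.mp hz1)
  · -- t empty means X empty
    refine ⟨1, one_pos, fun P hP w hw => absurd (hcov hw) ?_⟩
    simp [Finset.not_nonempty_iff_eq_empty.mp htne]
end

section
/- Let U ⊆ ℂ be open, f : U → ℂ holomorphic and nowhere locally constant, and X ⊆ U compact. For every ε > 0 there exists r > 0 such that for every z ∈ X, the image f(D(z, ε) ∩ U) contains the open disc D(f(z), r). -/
open Set Metric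
open Topology Filter

theorem stmt5 (U : Set ℂ) (hU : IsOpen U)
    (f : ℂ → ℂ) (hf : DifferentiableOn ℂ f U)
    (hnlc : ∀ W : Set ℂ, IsOpen W → W ⊆ U → W.Nonempty → ¬ ∃ c, ∀ z ∈ W, f z = c)
    (X : Set ℂ) (hX : IsCompact X) (hXU : X ⊆ U) :
    ∀ ε > 0, ∃ r > 0, ∀ z ∈ X,
      Metric.ball (f z) r ⊆ f '' (Metric.ball z ε ∩ U) := by
  intro ε hε
  rcases X.eq_empty_or_nonempty with rfl | hXne
  · exact ⟨1, one_pos, fun z hz => absurd hz (notMem_empty z)⟩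
  -- Local open mapping at each point of X
  have key : ∀ z ∈ X, 𝓝 (f z) ≤ Filter.map f (𝓝 z) := by
    intro z hz
    have ha : AnalyticAt ℂ f z := hf.analyticAt (hU.mem_nhds (hXU hz))
    rcases ha.eventually_constant_or_nhds_le_map_nhds with h | h
    · exfalso
      rcases Metric.eventually_nhds_iff.mp h with ⟨δ, hδ, hc⟩
      have hzU := hU.mem_nhds (hXU hz)
      rcases Metric.mem_nhds_iff.mp hzU with ⟨δ', hδ', hsub⟩
      refine hnlc (ball z (min δ δ')) isOpen_ball
        ((ball_subset_ball (min_le_right _ _)).trans hsub)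
        ⟨z, mem_ball_self (lt_min hδ hδ')⟩ ⟨f z, fun w hw => ?_⟩
      exact hc (lt_of_lt_of_le (mem_ball.mp hw) (min_le_left _ _))
    · exact h
  -- choose radii: ball (f z) (2 * r z) ⊆ f '' (ball z (ε/2) ∩ U)
  have hr' : ∀ z ∈ X, ∃ ρ > 0, ball (f z) (2 * ρ) ⊆ f '' (ball z (ε / 2) ∩ U) := by
    intro z hz
    have hmem : ball z (ε / 2) ∩ U ∈ 𝓝 z :=
      Filter.inter_mem (ball_mem_nhds z (half_pos hε)) (hU.mem_nhds (hXU hz))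
    have himg : f '' (ball z (ε / 2) ∩ U) ∈ 𝓝 (f z) := key z hz (Filter.image_mem_map hmem)
    rcases Metric.mem_nhds_iff.mp himg with ⟨ρ, hρ, hsub⟩
    exact ⟨ρ / 2, half_pos hρ, (ball_subset_ball (by linarith)).trans hsub⟩
  choose! r hrpos hrball using hr'
  -- choose δ via continuity
  have hδ' : ∀ z ∈ X, ∃ δ > 0, δ ≤ ε / 2 ∧ ∀ w, dist w z < δ → dist (f w) (f z) < r z := by
    intro z hz
    have hc : ContinuousAt f z :=
      (hf.differentiableAt (hU.mem_nhds (hXU hz))).continuousAt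
    rcases Metric.continuousAt_iff.mp hc (r z) (hrpos z hz) with ⟨δ, hδ, hcd⟩
    exact ⟨min δ (ε / 2), lt_min hδ (half_pos hε), min_le_right _ _,
      fun w hw => hcd (lt_of_lt_of_le hw (min_le_left _ _))⟩
  choose! δ hδpos hδle hδcont using hδ'
  -- compactness
  obtain ⟨t, hcov⟩ := hX.elim_nhds_subcover' (fun z hz => ball z (δ z))
    (fun z hz => ball_mem_nhds z (hδpos z hz))
  rcases t.eq_empty_or_nonempty with rfl | htne
  · obtain ⟨x, hx⟩ := hXne
    simpa using hcov hx
  set R := t.inf' htne (fun z => r z) with hR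
  have hRpos : 0 < R := by
    exact (Finset.lt_inf'_iff htne).mpr fun z _ => hrpos z z.2
  refine ⟨R, hRpos, fun w hw => ?_⟩
  obtain ⟨z, hzt, hwz⟩ := Set.mem_iUnion₂.mp (hcov hw)
  have hzX : (z : ℂ) ∈ X := z.2
  have hRr : R ≤ r z := Finset.inf'_le _ hzt
  have hdw : dist (f w) (f z) < r z := hδcont z hzX w (mem_ball.mp hwz)
  intro y hy
  have hy2 : y ∈ ball (f z) (2 * r z) := by
    have h1 : dist y (f w) < R := mem_ball.mp hy
    calc dist y (f z) ≤ dist y (f w) + dist (f w) (f z) := dist_triangle _ _ _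
      _ < R + r z := add_lt_add h1 hdw
      _ ≤ 2 * r z := by linarith
  obtain ⟨x, ⟨hx1, hx2⟩, hx3⟩ := hrball z hzX hy2
  refine ⟨x, ⟨?_, hx2⟩, hx3⟩
  have : dist x w ≤ dist x z + dist (z : ℂ) w := dist_triangle _ _ _
  have hzw : dist (z : ℂ) w < ε / 2 := lt_of_lt_of_le (by rw [dist_comm]; exact mem_ball.mp hwz) (hδle z hzX)
  have hxz : dist x z < ε / 2 := mem_ball.mp hx1
  exact mem_ball.mpr (by linarith)
end

section
/- Let n ≥ 0, let U₀, …, Uₙ be open subsets of ℂ and let g₀, …, gₙ be continuous functions gₖ : Uₖ → ℂ. For k ≤ n set Gₖ = gₖ ∘ ⋯ ∘ g₀. Suppose K ⊆ U₀ is compact and Gₙ is defined on K (i.e., Gₖ(K) ⊆ U_{k+1} for all k < n). Then for every ε > 0 there exists δ > 0 such that: if f₀, …, fₙ are continuous functions fₖ : Uₖ → ℂ with |fₖ(z) − gₖ(z)| < δ for all z ∈ Uₖ and each k, then the compositions Fₖ = fₖ ∘ ⋯ ∘ f₀ are defined on K and |Fₖ(z) − Gₖ(z)| < ε for all z ∈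 K and all k ≤ n. -/
open Set Metric

/-- The composition `g k ∘ g (k-1) ∘ ⋯ ∘ g 0`. -/
def compChain (g : ℕ → ℂ → ℂ) : ℕ → ℂ → ℂ
  | 0 => g 0
  | (k + 1) => g (k + 1) ∘ compChain g k

lemma compChain_continuousOn (g : ℕ → ℂ → ℂ) (U : ℕ → Set ℂ) (K : Set ℂ)
    (hK0 : K ⊆ U 0) (n : ℕ) (hg : ∀ k ≤ n, ContinuousOn (g k) (U k))
    (hdef : ∀ k < n, compChain g k '' K ⊆ U (k + 1)) :
    ∀ k ≤ n, ContinuousOn (compChain g k) K := by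
  intro k
  induction k with
  | zero => exact fun _ => (hg 0 (Nat.zero_le _)).mono hK0
  | succ k ih =>
    intro hk
    have hk' : k ≤ n := (Nat.le_succ k).trans hk
    exact (hg (k + 1) hk).comp (ih hk')
      (fun z hz => hdef k hk (mem_image_of_mem _ hz))

lemma stmt6aux (U : ℕ → Set ℂ) (g : ℕ → ℂ → ℂ)
    (K : Set ℂ) (hK : IsCompact K) (hK0 : K ⊆ U 0) :
    ∀ n : ℕ, (∀ k ≤ n, IsOpen (U k)) →
    (∀ k ≤ n, ContinuousOn (g k) (U k)) →
    (∀ k < n, compChain g k '' K ⊆ U (k + 1)) →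
    ∀ ε > 0, ∃ δ > 0, ∀ f : ℕ → ℂ → ℂ,
      (∀ k ≤ n, ContinuousOn (f k) (U k)) →
      (∀ k ≤ n, ∀ z ∈ U k, ‖f k z - g k z‖ < δ) →
      (∀ k < n, compChain f k '' K ⊆ U (k + 1)) ∧
      (∀ k ≤ n, ∀ z ∈ K, ‖compChain f k z - compChain g k z‖ < ε) := by
  intro n
  induction n with
  | zero =>
    intro hU hg hdef ε hε
    refine ⟨ε, hε, fun f hf hfg => ⟨fun k hk => absurd hk (Nat.not_lt_zero k), ?_⟩⟩
    intro k hk z hz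
    obtain rfl := Nat.le_zero.mp hk
    exact hfg 0 le_rfl z (hK0 hz)
  | succ n ih =>
    intro hU hg hdef ε hε
    have hU' : ∀ k ≤ n, IsOpen (U k) := fun k hk => hU k (hk.trans (Nat.le_succ n))
    have hg' : ∀ k ≤ n, ContinuousOn (g k) (U k) := fun k hk => hg k (hk.trans (Nat.le_succ n))
    have hdef' : ∀ k < n, compChain g k '' K ⊆ U (k + 1) :=
      fun k hk => hdef k (hk.trans (Nat.lt_succ_self n))
    set L := compChain g n '' K with hLdef
    have hLc : IsCompact L := hK.image_of_continuousOn
      (compChain_continuousOn g U K hK0 n hg' hdef' n le_rfl)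
    have hLU : L ⊆ U (n + 1) := hdef n (Nat.lt_succ_self n)
    obtain ⟨r, hr, hrU⟩ := hLc.exists_thickening_subset_open (hU (n + 1) le_rfl) hLU
    set L' := cthickening (r / 2) L with hL'def
    have hL'c : IsCompact L' := hLc.cthickening
    have hL'U : L' ⊆ U (n + 1) :=
      (cthickening_subset_thickening' hr (by linarith) L).trans hrU
    have huc : UniformContinuousOn (g (n + 1)) L' :=
      hL'c.uniformContinuousOn_of_continuous ((hg (n + 1) le_rfl).mono hL'U)
    rw [Metric.uniformContinuousOn_iff] at huc
    obtain ⟨η, hη, hηc⟩ := huc (ε / 2) (by linarith)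
    obtain ⟨δ₀, hδ₀, hIH⟩ := ih hU' hg' hdef' (min (min η (r / 2)) (ε / 2)) (by positivity)
    refine ⟨min δ₀ (ε / 2), by positivity, fun f hf hfg => ?_⟩
    have hf' : ∀ k ≤ n, ContinuousOn (f k) (U k) := fun k hk => hf k (hk.trans (Nat.le_succ n))
    have hfg' : ∀ k ≤ n, ∀ z ∈ U k, ‖f k z - g k z‖ < δ₀ := fun k hk z hz =>
      lt_of_lt_of_le (hfg k (hk.trans (Nat.le_succ n)) z hz) (min_le_left _ _)
    obtain ⟨hFdef, hFclose⟩ := hIH f hf' hfg'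
    have hmem : ∀ z ∈ K, compChain f n z ∈ L' := by
      intro z hz
      have h1 := hFclose n le_rfl z hz
      have h2 : dist (compChain f n z) (compChain g n z) ≤ r / 2 := by
        rw [dist_eq_norm]
        exact le_of_lt (lt_of_lt_of_le h1 ((min_le_left _ _).trans (min_le_right _ _)))
      exact mem_cthickening_of_dist_le _ _ _ _ (mem_image_of_mem _ hz) h2
    have hgmem : ∀ z ∈ K, compChain g n z ∈ L' := fun z hz =>
      self_subset_cthickening L (mem_image_of_mem _ hz)
    constructor
    · intro k hk
      rcases Nat.lt_succ_iff_lt_or_eq.mp hk with h | rfl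
      · exact hFdef k h
      · rintro w ⟨z, hz, rfl⟩
        exact hL'U (hmem z hz)
    · intro k hk z hz
      rcases Nat.le_succ_iff.mp hk with h | rfl
      · exact lt_of_lt_of_le (hFclose k h z hz) (by
          have : min (min η (r / 2)) (ε / 2) ≤ ε / 2 := min_le_right _ _
          linarith)
      · have ha : compChain f n z ∈ L' := hmem z hz
        have hb : compChain g n z ∈ L' := hgmem z hz
        have hab : dist (compChain f n z) (compChain g n z) < η := by
          rw [dist_eq_norm]
          exact lt_of_lt_of_le (hFclose n le_rfl z hz) ((min_le_left _ _).trans (min_le_left _ _))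
        have h2 : dist (g (n + 1) (compChain f n z)) (g (n + 1) (compChain g n z)) < ε / 2 :=
          hηc _ ha _ hb hab
        have h1 : ‖f (n + 1) (compChain f n z) - g (n + 1) (compChain f n z)‖ < ε / 2 :=
          lt_of_lt_of_le (hfg (n + 1) le_rfl _ (hL'U ha)) (min_le_right _ _)
        show ‖f (n + 1) (compChain f n z) - g (n + 1) (compChain g n z)‖ < ε
        rw [dist_eq_norm] at h2
        calc ‖f (n + 1) (compChain f n z) - g (n + 1) (compChain g n z)‖
            ≤ ‖f (n + 1) (compChain f n z) - g (n + 1) (compChain f n z)‖ +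
              ‖g (n + 1) (compChain f n z) - g (n + 1) (compChain g n z)‖ := by
              have := norm_sub_le_norm_sub_add_norm_sub (f (n + 1) (compChain f n z))
                (g (n + 1) (compChain f n z)) (g (n + 1) (compChain g n z))
              exact this
          _ < ε / 2 + ε / 2 := add_lt_add h1 h2
          _ = ε := by ring

theorem stmt6 (n : ℕ) (U : ℕ → Set ℂ) (g : ℕ → ℂ → ℂ)
    (hU : ∀ k ≤ n, IsOpen (U k))
    (hg : ∀ k ≤ n, ContinuousOn (g k) (U k))
    (K : Set ℂ) (hK : IsCompact K) (hK0 : K ⊆ U 0)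
    (hdef : ∀ k < n, compChain g k '' K ⊆ U (k + 1)) :
    ∀ ε > 0, ∃ δ > 0, ∀ f : ℕ → ℂ → ℂ,
      (∀ k ≤ n, ContinuousOn (f k) (U k)) →
      (∀ k ≤ n, ∀ z ∈ U k, ‖f k z - g k z‖ < δ) →
      (∀ k < n, compChain f k '' K ⊆ U (k + 1)) ∧
      (∀ k ≤ n, ∀ z ∈ K, ‖compChain f k z - compChain g k z‖ < ε) :=
  stmt6aux U g K hK hK0 n hU hg hdef
end

section
/- Let U₀ ⊆ ℂ be open, g₀ : U₀ → ℂ holomorphic, U ⊆ U₀ open with compact closure contained in U₀, and V₁ ⊆ ℂ open with g₀(closure(U)) ⊆ V₁. Then for every δ₀ > 0 there exists δ₁ > 0 with the following property: whenever f₀ : U₀ → ℂ is holomorphic with |f₀ − g₀| < δ₁ on U₀, and θ : V₁ → ℂ is a holomorphic injection with |θ(w) − w| < δ₁ for all w ∈ V₁, then f₀(closure(U)) ⊆ θ(V₁) and |θ⁻¹(f₀(z)) − g₀(z)| < δ₀ for all z ∈ closure(U). -/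
open Set Metric

theorem stmt19 (U₀ U V₁ : Set ℂ) (hU₀ : IsOpen U₀) (hUopen : IsOpen U) (hV₁ : IsOpen V₁)
    (g₀ : ℂ → ℂ) (hg₀ : DifferentiableOn ℂ g₀ U₀)
    (hUc : IsCompact (closure U)) (hUU₀ : closure U ⊆ U₀)
    (himg : g₀ '' closure U ⊆ V₁) :
    ∀ δ₀ > 0, ∃ δ₁ > 0, ∀ f₀ θ : ℂ → ℂ,
      DifferentiableOn ℂ f₀ U₀ → (∀ z ∈ U₀, ‖f₀ z - g₀ z‖ < δ₁) →
      DifferentiableOn ℂ θ V₁ → Set.InjOn θ V₁ →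
      (∀ w ∈ V₁, ‖θ w - w‖ < δ₁) →
      f₀ '' closure U ⊆ θ '' V₁ ∧
      ∀ z ∈ closure U, ∀ w ∈ V₁, θ w = f₀ z → ‖w - g₀ z‖ < δ₀ := by
  intro δ₀ hδ₀
  -- compact image
  have hK : IsCompact (g₀ '' closure U) := hUc.image_of_continuousOn (hg₀.continuousOn.mono hUU₀)
  obtain ⟨r, hr, hrsub⟩ := hK.exists_cthickening_subset_open hV₁ himg
  refine ⟨min (δ₀ / 2) (r / 7), by positivity, ?_⟩
  intro f₀ θ hf₀ hf₀close hθ hθinj hθclose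
  set δ₁ := min (δ₀ / 2) (r / 7) with hδ₁def
  have hδ₁r : δ₁ ≤ r / 7 := min_le_right _ _
  have hδ₁δ₀ : δ₁ ≤ δ₀ / 2 := min_le_left _ _
  have key : ∀ z ∈ closure U, f₀ z ∈ θ '' V₁ := by
    intro z hz
    have hz₀K : g₀ z ∈ g₀ '' closure U := mem_image_of_mem _ hz
    have hball : closedBall (g₀ z) r ⊆ V₁ :=
      (closedBall_subset_cthickening hz₀K r).trans hrsub
    have hz₀V : g₀ z ∈ V₁ := himg hz₀K
    have hdc : DiffContOnCl ℂ θ (ball (g₀ z) r) := by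
      apply DifferentiableOn.diffContOnCl
      rw [closure_ball _ hr.ne']
      exact hθ.mono hball
    have hfreq : ∃ᶠ w in nhds (g₀ z), θ w ≠ θ (g₀ z) := by
      have h1 : ∀ᶠ w in nhdsWithin (g₀ z) {(g₀ z)}ᶜ, θ w ≠ θ (g₀ z) := by
        filter_upwards [eventually_nhdsWithin_of_eventually_nhds
          (hV₁.eventually_mem hz₀V), self_mem_nhdsWithin] with w hwV hwne
        exact fun h => hwne (hθinj hwV hz₀V h)
      exact (h1.frequently).filter_mono nhdsWithin_le_nhds
    have hsphere : ∀ w ∈ sphere (g₀ z) r, r - 2 * δ₁ ≤ ‖θ w - θ (g₀ z)‖ := by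
      intro w hw
      have hwV : w ∈ V₁ := hball (sphere_subset_closedBall hw)
      have h1 : ‖θ w - w‖ < δ₁ := hθclose w hwV
      have h2 : ‖θ (g₀ z) - g₀ z‖ < δ₁ := hθclose _ hz₀V
      have h3 : ‖w - g₀ z‖ = r := mem_sphere_iff_norm.mp hw
      have : ‖w - g₀ z‖ ≤ ‖θ w - θ (g₀ z)‖ + ‖θ w - w‖ + ‖θ (g₀ z) - g₀ z‖ := by
        have := norm_add₃_le (a := θ (g₀ z) - θ w) (b := θ w - w) (c := g₀ z - g₀ z + (θ (g₀ z) - θ (g₀ z)))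
        calc ‖w - g₀ z‖ = ‖(w - θ w) + (θ w - θ (g₀ z)) + (θ (g₀ z) - g₀ z)‖ := by ring_nf
          _ ≤ ‖w - θ w‖ + ‖θ w - θ (g₀ z)‖ + ‖θ (g₀ z) - g₀ z‖ := norm_add₃_le
          _ = ‖θ w - θ (g₀ z)‖ + ‖θ w - w‖ + ‖θ (g₀ z) - g₀ z‖ := by
              rw [norm_sub_rev (w) (θ w)]; ring
      linarith
    have hsub := hdc.ball_subset_image_closedBall hr hsphere hfreq
    have hmem : f₀ z ∈ ball (θ (g₀ z)) ((r - 2 * δ₁) / 2) := by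
      rw [mem_ball, dist_eq_norm]
      have h1 : ‖f₀ z - g₀ z‖ < δ₁ := hf₀close z (hUU₀ hz)
      have h2 : ‖θ (g₀ z) - g₀ z‖ < δ₁ := hθclose _ hz₀V
      have : ‖f₀ z - θ (g₀ z)‖ ≤ ‖f₀ z - g₀ z‖ + ‖θ (g₀ z) - g₀ z‖ := by
        calc ‖f₀ z - θ (g₀ z)‖ = ‖(f₀ z - g₀ z) - (θ (g₀ z) - g₀ z)‖ := by ring_nf
          _ ≤ ‖f₀ z - g₀ z‖ + ‖θ (g₀ z) - g₀ z‖ := norm_sub_le _ _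
      have hδ₁pos : 0 < δ₁ := lt_min (by linarith) (by linarith)
      linarith
    obtain ⟨w, hw, hweq⟩ := hsub hmem
    exact ⟨w, hball hw, hweq⟩
  constructor
  · rintro p ⟨z, hz, rfl⟩
    exact key z hz
  · intro z hz w hwV hweq
    have h1 : ‖θ w - w‖ < δ₁ := hθclose w hwV
    have h2 : ‖f₀ z - g₀ z‖ < δ₁ := hf₀close z (hUU₀ hz)
    have : ‖w - g₀ z‖ ≤ ‖θ w - w‖ + ‖f₀ z - g₀ z‖ := by
      calc ‖w - g₀ z‖ = ‖(w - θ w) + (f₀ z - g₀ z)‖ := by rw [hweq]; ring_nf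
        _ ≤ ‖w - θ w‖ + ‖f₀ z - g₀ z‖ := norm_add_le _ _
        _ = ‖θ w - w‖ + ‖f₀ z - g₀ z‖ := by rw [norm_sub_rev]
    linarith
end
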